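/- Let A ∈ LDO^0(n), i.e. an n-multilinear local differential operator whose polarized form contains no total derivatives d/dy_1 (equivalently χ(A) = A), viewed as a map Loc(E)^{⊗n} → Ω^{N,0}. Then E ∘ A = 0 (where E is the Euler operator) if and only if A = 0. -/

import Mathlib

open scoped BigOperators

namespace JetBundle

/-- Multi-indices `J = (j_1,…,j_N)`. -/
abbrev MI (N : ℕ) := Fin N → ℕ

/-- A point of the infinite jet bundle `J^∞E`, with coordinates `(x^i, u_J)`. -/
abbrev JetPt (N : ℕ) := (Fin N → ℝ) × (MI N → ℝ)

/-- Real-valued functions on the infinite jet bundle. -/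
abbrev Fn (N : ℕ) := JetPt N → ℝ

/-- Partial derivative with respect to the base coordinate `x^i`. -/
noncomputable def pderivX {N : ℕ} (i : Fin N) (f : Fn N) : Fn N :=
  fun p => deriv (fun t => f (Function.update p.1 i t, p.2)) (p.1 i)

/-- Partial derivative with respect to the jet coordinate `u_J`. -/
noncomputable def pderivU {N : ℕ} (J : MI N) (f : Fn N) : Fn N :=
  fun p => deriv (fun t => f (p.1, Function.update p.2 J t)) (p.2 J)

/-- `iJ` : the multi-index `J` with its `i`-th entry increased by `1`. -/
def inc {N : ℕ} (i : Fin N) (J : MI N) : MI N := Function.update J i (J i + 1)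

/-- The total derivative `d/dx^i = ∂/∂x^i + Σ_J u_{iJ} ∂/∂u_J`. -/
noncomputable def Dtot {N : ℕ} (i : Fin N) (f : Fn N) : Fn N :=
  fun p => pderivX i f p + ∑' J : MI N, p.2 (inc i J) * pderivU J f p

/-- Iterated total derivative `(d/dx)^I`. -/
noncomputable def DPow {N : ℕ} (I : MI N) : Fn N → Fn N :=
  (List.finRange N).foldr (fun i g => (Dtot i)^[I i] ∘ g) id

/-- Iterated vertical derivative `(∂/∂u)^α` for a finitely supported exponent `α`. -/
noncomputable def UPow {N : ℕ} (α : MI N →₀ ℕ) : Fn N → Fn N :=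
  α.support.toList.foldr (fun J g => (pderivU J)^[α J] ∘ g) id

/-- A local function: a smooth function of the base coordinates and
finitely many jet coordinates `u_J`. -/
def IsLocal {N : ℕ} (f : Fn N) : Prop :=
  ∃ (S : Finset (MI N)) (g : ((Fin N → ℝ) × (↥S → ℝ)) → ℝ),
    ContDiff ℝ (⊤ : ℕ∞) g ∧ ∀ p : JetPt N, f p = g (p.1, fun J => p.2 J.1)

/-- The formal differential degree of an exponent `α`: the maximal `|J|` with `α J ≠ 0`. -/
def degf {N : ℕ} (α : MI N →₀ ℕ) : ℕ := α.support.sup fun J => ∑ i, J i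

/-- Index type for the coefficients of an `n`-multilinear local differential operator:
a tuple of multi-indices `(I_1,…,I_n)` and vertical exponents `(α_1,…,α_n)`. -/
abbrev Idx (N n : ℕ) := (Fin n → MI N) × (Fin n → (MI N →₀ ℕ))

/-- Coefficient data of an `n`-multilinear local differential operator. -/
abbrev OpData (N n : ℕ) := Idx N n → Fn N

/-- `n`-multilinear operators on functions on the jet bundle. -/
abbrev Op (N n : ℕ) := (Fin n → Fn N) → Fn N

/-- An `n`-tuple of local functions. -/
def LocalTuple {N n : ℕ} (f : Fin n → Fn N) : Prop := ∀ j, IsLocal (f j)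

/-- Coefficient data is admissible if all coefficients are local functions and, for each `m`,
only finitely many coefficients with `Σ_j deg_f(α_j) ≤ m` are nonzero. -/
def Good {N n : ℕ} (q : OpData N n) : Prop :=
  (∀ Iα, IsLocal (q Iα)) ∧
    ∀ m : ℕ, {Iα : Idx N n | q Iα ≠ 0 ∧ ∑ j, degf (Iα.2 j) ≤ m}.Finite

/-- The (unpolarized) realization of coefficient data:
`A(f_1,…,f_n) = Σ p_{I,α} Π_j (d/dx)^{I_j} (∂/∂u)^{α_j} f_j`. -/
noncomputable def realizeU {N n : ℕ} (q : OpData N n) (f : Fin n → Fn N) : Fn N :=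
  fun pt => ∑' Iα : Idx N n, q Iα pt * ∏ j, DPow (Iα.1 j) (UPow (Iα.2 j) (f j)) pt

/-- The polarized realization of coefficient data: the slot `I_1` records powers of
`d/dy_1 = Σ_j d/dx_j`, i.e. total derivatives applied to the whole product, while for `j ≥ 2`
the slot `I_j` records powers of `d/dy_j = d/dx_j` acting on the `j`-th argument:
`A(f_1,…,f_n) = Σ q_{I;α} (d/dx)^{I_1} [ (∂/∂u)^{α_1}f_1 · Π_{j≥2} (d/dx)^{I_j}(∂/∂u)^{α_j} f_j ]`. -/
noncomputable def realizeP {N n : ℕ} [NeZero n] (q : OpData N n) (f : Fin n → Fn N) : Fn N :=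
  fun pt => ∑' Iα : Idx N n, q Iα pt *
    DPow (Iα.1 0) (fun p => ∏ j,
      if j = (0 : Fin n) then UPow (Iα.2 j) (f j) p
      else DPow (Iα.1 j) (UPow (Iα.2 j) (f j)) p) pt

/-- The characteristic, on polarized coefficient data:
`χ(q)_{(0,I_2,…,I_n);α} := Σ_{I_1} (−1)^{|I_1|} (d/dx)^{I_1} q_{I_1,I_2,…,I_n;α}`. -/
noncomputable def chiData {N n : ℕ} [NeZero n] (q : OpData N n) : OpData N n :=
  fun Iα =>
    if Iα.1 0 = 0 then
      fun pt => ∑' K : MI N,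
        (-1 : ℝ) ^ (∑ i, K i) * DPow K (q (Function.update Iα.1 0 K, Iα.2)) pt
    else 0

/-- `q` is a polarized presentation of the operator `A` (on local functions). -/
def Presents {N n : ℕ} [NeZero n] (q : OpData N n) (A : Op N n) : Prop :=
  ∀ f, LocalTuple f → ∀ pt, A f pt = realizeP q f pt

/-- `A` is an `n`-multilinear local differential operator (unpolarized form). -/
def IsLDO {N n : ℕ} (A : Op N n) : Prop :=
  ∃ q : OpData N n, Good q ∧ ∀ f, LocalTuple f → ∀ pt, A f pt = realizeU q f pt

/-- `A` is an `n`-multilinear local differential operator, given by a polarized presentation. -/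
def IsPLDO {N n : ℕ} [NeZero n] (A : Op N n) : Prop :=
  ∃ q : OpData N n, Good q ∧ Presents q A

/-- `A` is an `n`-multilinear local differential operator with vanishing characteristic. -/
def ChiZero {N n : ℕ} [NeZero n] (A : Op N n) : Prop :=
  ∃ q : OpData N n, Good q ∧ Presents q A ∧
    ∀ f, LocalTuple f → ∀ pt, realizeP (chiData q) f pt = 0

/-- Precomposition `A ∘ d/dx^i_j` with the total derivative acting on the `j`-th argument. -/
noncomputable def precompD {N n : ℕ} (A : Op N n) (i : Fin N) (j : Fin n) : Op N n :=
  fun f => A (Function.update f j (Dtot i (f j)))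

/-- A horizontal form, recorded by its coefficients on the basis
`(dx)^ε = (dx^1)^{ε^1} ∧ ⋯ ∧ (dx^N)^{ε^N}`, `ε : Fin N → Bool`. -/
abbrev Form (N : ℕ) := (Fin N → Bool) → Fn N

/-- The form-degree `|ε|`. -/
def wt {N : ℕ} (ε : Fin N → Bool) : ℕ := ∑ i, if ε i then 1 else 0

/-- The sign exponent: the number of entries of `ε` below `i` which are set. -/
def pos {N : ℕ} (i : Fin N) (ε : Fin N → Bool) : ℕ := ∑ l, if l < i ∧ ε l then 1 else 0

/-- The horizontal differential `d_H ω = Σ_i dx^i ∧ (d/dx^i) ω`. -/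
noncomputable def dH {N : ℕ} (ω : Form N) : Form N :=
  fun δ pt => ∑ i : Fin N,
    if δ i then (-1 : ℝ) ^ pos i δ * Dtot i (ω (Function.update δ i false)) pt else 0

/-- A matrix of operators acting on horizontal forms (linear case). -/
abbrev FormOp (N : ℕ) := (Fin N → Bool) → (Fin N → Bool) → (Fn N → Fn N)

/-- Application of a matrix of operators to a form. -/
noncomputable def applyFO {N : ℕ} (M : FormOp N) (ω : Form N) : Form N :=
  fun δ pt => ∑ ε : Fin N → Bool, M ε δ (ω ε) pt

/-- A degree element of `DEnd(n)`: a matrix indexed by basis multidegrees of the inputs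
`(ε_1,…,ε_n)` and of the output `δ`, with `n`-multilinear operator entries. -/
abbrev DMat (N n : ℕ) := (Fin n → (Fin N → Bool)) → (Fin N → Bool) → Op N n

/-- All matrix entries are local differential operators. -/
def LDOMat {N n : ℕ} [NeZero n] (F : DMat N n) : Prop := ∀ εs δ, IsPLDO (F εs δ)

/-- `F` represents a degree-`k` map of the regraded horizontal complexes
(`Ω_i := Ω^{N−i,0}`): the entry at `(ε⃗, δ)` vanishes unless
`N − wt δ = k + Σ_j (N − wt ε_j)`. -/
def GradedMat {N n : ℕ} (k : ℤ) (F : DMat N n) : Prop :=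
  ∀ εs δ, F εs δ ≠ 0 → (wt δ : ℤ) = (N : ℤ) - k - ∑ j, ((N : ℤ) - (wt (εs j) : ℤ))

/-- The differential `(δf)_s = d_H f_s − (−1)^k f_{s−1} d_H^{⊗n}` of the complex `DEnd_*(n)`,
written out on matrix entries. -/
noncomputable def deltaMat {N n : ℕ} (k : ℤ) (F : DMat N n) : DMat N n :=
  fun εs δ g =>
    (fun pt => ∑ i : Fin N,
      if δ i then (-1 : ℝ) ^ pos i δ * Dtot i (F εs (Function.update δ i false) g) pt else 0)
    -
    ((-1 : ℝ) ^ k) • (fun pt => ∑ j : Fin n, ∑ i : Fin N,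
      if εs j i = false then
        (-1 : ℝ) ^ ((∑ l ∈ Finset.univ.filter fun l => l < j, wt (εs l)) + pos i (εs j)) *
          F (Function.update εs j (Function.update (εs j) i true)) δ
            (Function.update g j (Dtot i (g j))) pt
      else 0)

/-- A matrix of operators vanishes (on local arguments). -/
def MatZeroLoc {N n : ℕ} (F : DMat N n) : Prop :=
  ∀ εs δ g, LocalTuple g → ∀ pt, F εs δ g pt = 0

/-- Two matrices of operators agree (on local arguments). -/
def MatEqLoc {N n : ℕ} (F G : DMat N n) : Prop :=
  ∀ εs δ g, LocalTuple g → ∀ pt, F εs δ g pt = G εs δ g pt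

/-- The projection `B_0 : DEnd_0(n) → LDO(n)`, i.e. the component `f_0` on the identifications
`[(Ω_*)^{⊗n}]_0 ≅ Loc(E)^{⊗n}`, `Ω_0 ≅ Loc(E)`. -/
def B0 {N n : ℕ} (F : DMat N n) : Op N n := F (fun _ _ => true) fun _ => true

/-- A form with coefficients in `LDO(n)`: an element of the operator complex `O^*(n)`. -/
abbrev OForm (N n : ℕ) := (Fin N → Bool) → Op N n

/-- The differential of the operator complex: `d(A (dx)^ε) = Σ_i (d/dx^i ∘ A) dx^i ∧ (dx)^ε`. -/
noncomputable def dO {N n : ℕ} (ω : OForm N n) : OForm N n :=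
  fun δ g pt => ∑ i : Fin N,
    if δ i then (-1 : ℝ) ^ pos i δ * Dtot i (ω (Function.update δ i false) g) pt else 0

/-- An element of `O^*(n)` concentrated in degree `k`. -/
def OGraded {N n : ℕ} (k : ℕ) (ω : OForm N n) : Prop := ∀ δ, ω δ ≠ 0 → wt δ = k

/-- All coefficients are local differential operators. -/
def OLDO {N n : ℕ} [NeZero n] (ω : OForm N n) : Prop := ∀ δ, IsPLDO (ω δ)

/-- An element of `O^*(n)` vanishes on local arguments. -/
def OZeroLoc {N n : ℕ} (ω : OForm N n) : Prop :=
  ∀ δ g, LocalTuple g → ∀ pt, ω δ g pt = 0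

/-- Two elements of `O^*(n)` agree on local arguments. -/
def OEqLoc {N n : ℕ} (ω η : OForm N n) : Prop :=
  ∀ δ g, LocalTuple g → ∀ pt, ω δ g pt = η δ g pt

/-- The Euler operator `E(L dx^1∧⋯∧dx^N) = Σ_I (−1)^{|I|} (d/dx)^I (∂L/∂u_I)`. -/
noncomputable def Euler {N : ℕ} (L : Fn N) : Fn N :=
  fun pt => ∑' I : MI N, (-1 : ℝ) ^ (∑ i, I i) * DPow I (pderivU I L) pt

end JetBundle
namespace JetBundle
open Function

variable {N : ℕ}

/-- restriction of a jet point to finitely many `u` coordinates -/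
def restr (S : Finset (MI N)) (p : JetPt N) : (Fin N → ℝ) × (↥S → ℝ) :=
  (p.1, fun J => p.2 J.1)

/-- `f` is a smooth function of `x` and the `u_J`, `J ∈ S`. -/
def Loc (S : Finset (MI N)) (f : Fn N) : Prop :=
  ∃ g : ((Fin N → ℝ) × (↥S → ℝ)) → ℝ, ContDiff ℝ (⊤ : ℕ∞) g ∧ ∀ p, f p = g (restr S p)

theorem isLocal_iff {f : Fn N} : IsLocal f ↔ ∃ S, Loc S f := Iff.rfl

theorem Loc.isLocal {S : Finset (MI N)} {f : Fn N} (h : Loc S f) : IsLocal f := ⟨S, h⟩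

theorem Loc.mono {S S' : Finset (MI N)} {f : Fn N} (hf : Loc S f) (h : S ⊆ S') : Loc S' f := by
  obtain ⟨g, hg, hfg⟩ := hf
  refine ⟨fun y => g (y.1, fun J => y.2 ⟨J.1, h J.2⟩), ?_, fun p => by rw [hfg]; rfl⟩
  apply hg.comp
  refine ContDiff.prodMk contDiff_fst ?_
  refine contDiff_pi.2 fun J => ?_
  have h2 : ContDiff ℝ (⊤ : ℕ∞) (fun y : (Fin N → ℝ) × (↥S' → ℝ) => y.2) := contDiff_snd
  have h3 : ContDiff ℝ (⊤ : ℕ∞) (fun v : ↥S' → ℝ => v ⟨J.1, h J.2⟩) :=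
    (ContinuousLinearMap.proj (R := ℝ) (φ := fun _ : {x // x ∈ S'} => ℝ) ⟨J.1, h J.2⟩).contDiff
  exact h3.comp h2

/-- direction vector for a `u` coordinate -/
def dirU (S : Finset (MI N)) (J : MI N) : (Fin N → ℝ) × (↥S → ℝ) :=
  (0, fun K => if (K : MI N) = J then 1 else 0)

/-- direction vector for an `x` coordinate -/
def dirX (S : Finset (MI N)) (i : Fin N) : (Fin N → ℝ) × (↥S → ℝ) :=
  ((fun j => if j = i then 1 else 0), 0)

theorem hasDerivAt_comp_lineU {S : Finset (MI N)} {g : ((Fin N → ℝ) × (↥S → ℝ)) → ℝ}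
    (hg : ContDiff ℝ (⊤ : ℕ∞) g) (p : JetPt N) (J : MI N) (t₀ : ℝ) :
    HasDerivAt (fun t => g (restr S (p.1, Function.update p.2 J t)))
      (fderiv ℝ g (restr S (p.1, Function.update p.2 J t₀)) (dirU S J)) t₀ := by
  have key : ∀ t : ℝ, restr S (p.1, Function.update p.2 J t)
      = ((p.1, fun K : ↥S => if (K : MI N) = J then (0:ℝ) else p.2 K.1) + t • dirU S J) := by
    intro t
    refine Prod.ext ?_ ?_
    · show p.1 = p.1 + t • 0
      simp
    · funext K
      show Function.update p.2 J t (K : MI N)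
        = (if (K : MI N) = J then (0:ℝ) else p.2 K.1) + t * (if (K : MI N) = J then 1 else 0)
      rw [Function.update_apply]
      by_cases h : (K : MI N) = J <;> simp [h]
  have h1 : HasDerivAt
      (fun t : ℝ => ((p.1, fun K : ↥S => if (K : MI N) = J then (0:ℝ) else p.2 K.1) + t • dirU S J))
      (dirU S J) t₀ := by
    simpa using ((hasDerivAt_id t₀).smul_const (dirU S J)).const_add
      ((p.1, fun K : ↥S => if (K : MI N) = J then (0:ℝ) else p.2 K.1))
  have h2 := ((hg.differentiable (by simp)) _).hasFDerivAt.comp_hasDerivAt t₀ h1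
  simp only [← key] at h2
  exact h2

theorem pderivU_of_rep {S : Finset (MI N)} {f : Fn N} {g : ((Fin N → ℝ) × (↥S → ℝ)) → ℝ}
    (hg : ContDiff ℝ (⊤ : ℕ∞) g) (hrep : ∀ p, f p = g (restr S p)) (J : MI N) (p : JetPt N) :
    pderivU J f p = fderiv ℝ g (restr S p) (dirU S J) := by
  have h := hasDerivAt_comp_lineU hg p J (p.2 J)
  have h2 : (fun t => f (p.1, Function.update p.2 J t))
      = fun t => g (restr S (p.1, Function.update p.2 J t)) := funext fun t => hrep _
  have h3 : (p.1, Function.update p.2 J (p.2 J)) = p := by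
    rw [Function.update_eq_self]
  rw [pderivU, h2]
  rw [h3] at h
  exact h.deriv

theorem Loc.pdU {S : Finset (MI N)} {f : Fn N} (hf : Loc S f) (J : MI N) :
    Loc S (pderivU J f) := by
  obtain ⟨g, hg, hrep⟩ := hf
  exact ⟨fun y => fderiv ℝ g y (dirU S J),
    (hg.fderiv_right (by simp)).clm_apply contDiff_const,
    fun p => pderivU_of_rep hg hrep J p⟩

theorem Loc.hasDerivAt_lineU {S : Finset (MI N)} {f : Fn N} (hf : Loc S f)
    (p : JetPt N) (J : MI N) (t₀ : ℝ) :
    HasDerivAt (fun t => f (p.1, Function.update p.2 J t))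
      (pderivU J f (p.1, Function.update p.2 J t₀)) t₀ := by
  obtain ⟨g, hg, hrep⟩ := hf
  have h := hasDerivAt_comp_lineU hg p J t₀
  have h2 : (fun t => f (p.1, Function.update p.2 J t))
      = fun t => g (restr S (p.1, Function.update p.2 J t)) := funext fun t => hrep _
  rw [h2, pderivU_of_rep hg hrep]
  exact h

theorem pderivU_eq_zero {S : Finset (MI N)} {f : Fn N} (hf : Loc S f) {J : MI N}
    (hJ : J ∉ S) : pderivU J f = fun _ => 0 := by
  obtain ⟨g, hg, hrep⟩ := hf
  funext p
  have h : (fun t => f (p.1, Function.update p.2 J t)) = fun _ => g (restr S p) := by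
    funext t
    rw [hrep]
    congr 1
    refine Prod.ext rfl ?_
    funext K
    show Function.update p.2 J t (K : MI N) = p.2 K.1
    rw [Function.update_apply, if_neg]
    exact fun hc => hJ (hc ▸ K.2)
  rw [pderivU, h, deriv_const]


set_option linter.dupNamespace false

theorem hasDerivAt_comp_lineX {S : Finset (MI N)} {g : ((Fin N → ℝ) × (↥S → ℝ)) → ℝ}
    (hg : ContDiff ℝ (⊤ : ℕ∞) g) (p : JetPt N) (i : Fin N) (t₀ : ℝ) :
    HasDerivAt (fun t => g (restr S (Function.update p.1 i t, p.2)))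
      (fderiv ℝ g (restr S (Function.update p.1 i t₀, p.2)) (dirX S i)) t₀ := by
  have key : ∀ t : ℝ, restr S (Function.update p.1 i t, p.2)
      = (((fun j => if j = i then (0:ℝ) else p.1 j), fun K : ↥S => p.2 K.1) + t • dirX S i) := by
    intro t
    refine Prod.ext ?_ ?_
    · funext j
      have hr : (((fun j => if j = i then (0:ℝ) else p.1 j), fun K : ↥S => p.2 K.1) + t • dirX S i).1 j
          = (if j = i then (0:ℝ) else p.1 j) + t * (if j = i then 1 else 0) := rfl
      show Function.update p.1 i t j = _
      rw [hr, Function.update_apply]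
      by_cases h : j = i <;> simp [h]
    · funext K
      show p.2 K.1 = p.2 K.1 + t * 0
      simp
  have h1 : HasDerivAt
      (fun t : ℝ => (((fun j => if j = i then (0:ℝ) else p.1 j), fun K : ↥S => p.2 K.1) + t • dirX S i))
      (dirX S i) t₀ := by
    simpa using ((hasDerivAt_id t₀).smul_const (dirX S i)).const_add
      (((fun j => if j = i then (0:ℝ) else p.1 j), fun K : ↥S => p.2 K.1))
  have h2 := ((hg.differentiable (by simp)) _).hasFDerivAt.comp_hasDerivAt t₀ h1
  simp only [← key] at h2
  exact h2

theorem pderivX_of_rep {S : Finset (MI N)} {f : Fn N} {g : ((Fin N → ℝ) × (↥S → ℝ)) → ℝ}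
    (hg : ContDiff ℝ (⊤ : ℕ∞) g) (hrep : ∀ p, f p = g (restr S p)) (i : Fin N) (p : JetPt N) :
    pderivX i f p = fderiv ℝ g (restr S p) (dirX S i) := by
  have h := hasDerivAt_comp_lineX hg p i (p.1 i)
  have h2 : (fun t => f (Function.update p.1 i t, p.2))
      = fun t => g (restr S (Function.update p.1 i t, p.2)) := funext fun t => hrep _
  have h3 : (Function.update p.1 i (p.1 i), p.2) = p := by
    rw [Function.update_eq_self]
  rw [pderivX, h2]
  rw [h3] at h
  exact h.deriv

theorem Loc.pdX {S : Finset (MI N)} {f : Fn N} (hf : Loc S f) (i : Fin N) :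
    Loc S (pderivX i f) := by
  obtain ⟨g, hg, hrep⟩ := hf
  exact ⟨fun y => fderiv ℝ g y (dirX S i),
    (hg.fderiv_right (by simp)).clm_apply contDiff_const,
    fun p => pderivX_of_rep hg hrep i p⟩

theorem Loc.hasDerivAt_lineX {S : Finset (MI N)} {f : Fn N} (hf : Loc S f)
    (p : JetPt N) (i : Fin N) (t₀ : ℝ) :
    HasDerivAt (fun t => f (Function.update p.1 i t, p.2))
      (pderivX i f (Function.update p.1 i t₀, p.2)) t₀ := by
  obtain ⟨g, hg, hrep⟩ := hf
  have h := hasDerivAt_comp_lineX hg p i t₀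
  have h2 : (fun t => f (Function.update p.1 i t, p.2))
      = fun t => g (restr S (Function.update p.1 i t, p.2)) := funext fun t => hrep _
  rw [h2, pderivX_of_rep hg hrep]
  exact h

theorem Loc.hasDerivAt_lineU_self {S : Finset (MI N)} {f : Fn N} (hf : Loc S f)
    (p : JetPt N) (J : MI N) :
    HasDerivAt (fun t => f (p.1, Function.update p.2 J t)) (pderivU J f p) (p.2 J) := by
  have h := hf.hasDerivAt_lineU p J (p.2 J)
  rwa [Function.update_eq_self, Prod.mk.eta] at h

theorem Loc.hasDerivAt_lineX_self {S : Finset (MI N)} {f : Fn N} (hf : Loc S f)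
    (p : JetPt N) (i : Fin N) :
    HasDerivAt (fun t => f (Function.update p.1 i t, p.2)) (pderivX i f p) (p.1 i) := by
  have h := hf.hasDerivAt_lineX p i (p.1 i)
  rwa [Function.update_eq_self, Prod.mk.eta] at h

theorem Loc.const (S : Finset (MI N)) (c : ℝ) : Loc S (fun _ => c) :=
  ⟨fun _ => c, contDiff_const, fun _ => rfl⟩

theorem Loc.ofX (S : Finset (MI N)) {w : (Fin N → ℝ) → ℝ} (hw : ContDiff ℝ (⊤ : ℕ∞) w) :
    Loc S (fun p => w p.1) :=
  ⟨fun y => w y.1, hw.comp contDiff_fst, fun _ => rfl⟩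

theorem Loc.coord {S : Finset (MI N)} {J : MI N} (hJ : J ∈ S) : Loc S (fun p => p.2 J) :=
  ⟨fun y => y.2 ⟨J, hJ⟩,
    (ContinuousLinearMap.proj (R := ℝ) (φ := fun _ : {x // x ∈ S} => ℝ) ⟨J, hJ⟩).contDiff.comp
      contDiff_snd, fun _ => rfl⟩

theorem Loc.add {S : Finset (MI N)} {f g : Fn N} (hf : Loc S f) (hg : Loc S g) :
    Loc S (fun p => f p + g p) := by
  obtain ⟨gf, hgf, hf⟩ := hf; obtain ⟨gg, hgg, hg⟩ := hg
  exact ⟨fun y => gf y + gg y, hgf.add hgg, fun p => by show f p + g p = _; rw [hf, hg]⟩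

theorem Loc.mul {S : Finset (MI N)} {f g : Fn N} (hf : Loc S f) (hg : Loc S g) :
    Loc S (fun p => f p * g p) := by
  obtain ⟨gf, hgf, hf⟩ := hf; obtain ⟨gg, hgg, hg⟩ := hg
  exact ⟨fun y => gf y * gg y, hgf.mul hgg, fun p => by show f p * g p = _; rw [hf, hg]⟩

theorem Loc.finsetSum {S : Finset (MI N)} {ι : Type*} (t : Finset ι) (F : ι → Fn N)
    (h : ∀ j ∈ t, Loc S (F j)) : Loc S (fun p => ∑ j ∈ t, F j p) := by
  classical
  induction t using Finset.induction_on with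
  | empty => simpa using Loc.const S 0
  | insert a s hnotmem ih =>
    have h1 : Loc S (fun p => F a p + ∑ j ∈ s, F j p) :=
      (h a (Finset.mem_insert_self a s)).add (ih fun j hj => h j (Finset.mem_insert_of_mem hj))
    simpa [Finset.sum_insert hnotmem] using h1

theorem Loc.finsetProd {S : Finset (MI N)} {ι : Type*} (t : Finset ι) (F : ι → Fn N)
    (h : ∀ j ∈ t, Loc S (F j)) : Loc S (fun p => ∏ j ∈ t, F j p) := by
  classical
  induction t using Finset.induction_on with
  | empty => simpa using Loc.const S 1
  | insert a s hnotmem ih =>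
    have h1 : Loc S (fun p => F a p * ∏ j ∈ s, F j p) :=
      (h a (Finset.mem_insert_self a s)).mul (ih fun j hj => h j (Finset.mem_insert_of_mem hj))
    simpa [Finset.prod_insert hnotmem] using h1

theorem IsLocal.mul' {f g : Fn N} (hf : IsLocal f) (hg : IsLocal g) :
    IsLocal (fun p => f p * g p) := by
  obtain ⟨S, hf⟩ := isLocal_iff.1 hf; obtain ⟨T, hg⟩ := isLocal_iff.1 hg
  exact ⟨S ∪ T, (hf.mono Finset.subset_union_left).mul (hg.mono Finset.subset_union_right)⟩

theorem IsLocal.add' {f g : Fn N} (hf : IsLocal f) (hg : IsLocal g) :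
    IsLocal (fun p => f p + g p) := by
  obtain ⟨S, hf⟩ := isLocal_iff.1 hf; obtain ⟨T, hg⟩ := isLocal_iff.1 hg
  exact ⟨S ∪ T, (hf.mono Finset.subset_union_left).add (hg.mono Finset.subset_union_right)⟩

theorem IsLocal.pdU {f : Fn N} (hf : IsLocal f) (J : MI N) : IsLocal (pderivU J f) := by
  obtain ⟨S, hf⟩ := isLocal_iff.1 hf; exact ⟨S, hf.pdU J⟩

/- unconditional pointwise rules -/

theorem pderivU_xmul (v : (Fin N → ℝ) → ℝ) (f : Fn N) (J : MI N) :
    pderivU J (fun p => v p.1 * f p) = fun p => v p.1 * pderivU J f p := by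
  funext p
  exact deriv_const_mul_field (v p.1)

theorem pderivU_const_mul (c : ℝ) (f : Fn N) (J : MI N) :
    pderivU J (fun p => c * f p) = fun p => c * pderivU J f p := by
  funext p
  exact deriv_const_mul_field c

theorem pderivU_zero_fn (J : MI N) : pderivU J (fun _ => (0:ℝ)) = fun _ => 0 := by
  funext p
  exact deriv_const _ _

theorem pderivU_add {S : Finset (MI N)} {f g : Fn N} (hf : Loc S f) (hg : Loc S g) (J : MI N) :
    pderivU J (fun p => f p + g p) = fun p => pderivU J f p + pderivU J g p := by
  funext p
  exact ((hf.hasDerivAt_lineU_self p J).add (hg.hasDerivAt_lineU_self p J)).deriv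

theorem dtot_eq {S : Finset (MI N)} {f : Fn N} (hf : Loc S f) (i : Fin N) :
    Dtot i f = fun p => pderivX i f p + ∑ J ∈ S, p.2 (inc i J) * pderivU J f p := by
  funext p
  rw [Dtot]
  congr 1
  refine tsum_eq_sum fun J hJ => ?_
  rw [pderivU_eq_zero hf hJ]
  exact mul_zero _

theorem Loc.dto {S : Finset (MI N)} {f : Fn N} (hf : Loc S f) (i : Fin N) :
    Loc (S ∪ S.image (inc i)) (Dtot i f) := by
  rw [dtot_eq hf i]
  refine Loc.add ((hf.pdX i).mono Finset.subset_union_left) ?_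
  refine Loc.finsetSum S _ fun J hJ => ?_
  refine Loc.mul (Loc.coord ?_) ((hf.pdU J).mono Finset.subset_union_left)
  exact Finset.mem_union_right _ (Finset.mem_image_of_mem _ hJ)

theorem IsLocal.dto {f : Fn N} (hf : IsLocal f) (i : Fin N) : IsLocal (Dtot i f) := by
  obtain ⟨S, hf⟩ := isLocal_iff.1 hf
  exact ⟨_, hf.dto i⟩

theorem IsLocal.iterD {f : Fn N} (hf : IsLocal f) (i : Fin N) (m : ℕ) :
    IsLocal ((Dtot i)^[m] f) := by
  induction m with
  | zero => exact hf
  | succ k ih => rw [Function.iterate_succ_apply']; exact ih.dto i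

theorem Dtot_smul (c : ℝ) (f : Fn N) (i : Fin N) :
    Dtot i (fun p => c * f p) = fun p => c * Dtot i f p := by
  funext p
  rw [Dtot, Dtot]
  have h1 : pderivX i (fun p => c * f p) p = c * pderivX i f p := deriv_const_mul_field c
  rw [h1]
  simp only [pderivU_const_mul]
  rw [mul_add]
  congr 1
  rw [← tsum_mul_left]
  exact tsum_congr fun J => by ring

theorem Dtot_zero_fn (i : Fin N) : Dtot i (fun _ => (0:ℝ)) = fun _ => 0 := by
  have h : (fun _ : JetPt N => (0:ℝ)) = fun p => (0:ℝ) * (fun _ : JetPt N => (0:ℝ)) p := by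
    funext p; ring
  rw [h, Dtot_smul]
  funext p; ring

theorem pderivX_add {S : Finset (MI N)} {f g : Fn N} (hf : Loc S f) (hg : Loc S g) (i : Fin N) :
    pderivX i (fun p => f p + g p) = fun p => pderivX i f p + pderivX i g p := by
  funext p
  exact ((hf.hasDerivAt_lineX_self p i).add (hg.hasDerivAt_lineX_self p i)).deriv

theorem Dtot_add' {f g : Fn N} (hf : IsLocal f) (hg : IsLocal g) (i : Fin N) :
    Dtot i (fun p => f p + g p) = fun p => Dtot i f p + Dtot i g p := by
  obtain ⟨Sf, hf⟩ := isLocal_iff.1 hf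
  obtain ⟨Sg, hg⟩ := isLocal_iff.1 hg
  have hf' := hf.mono (Finset.subset_union_left (s₂ := Sg))
  have hg' := hg.mono (Finset.subset_union_right (s₁ := Sf))
  rw [dtot_eq hf' i, dtot_eq hg' i, dtot_eq (hf'.add hg') i]
  funext p
  rw [pderivX_add hf' hg']
  simp only [pderivU_add hf' hg']
  rw [Finset.sum_congr rfl (fun J _ => mul_add (p.2 (inc i J)) _ _), Finset.sum_add_distrib]
  ring

theorem iter_smul (c : ℝ) (f : Fn N) (j : Fin N) (m : ℕ) :
    (Dtot j)^[m] (fun p => c * f p) = fun p => c * (Dtot j)^[m] f p := by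
  induction m with
  | zero => rfl
  | succ k ih => rw [Function.iterate_succ_apply', Function.iterate_succ_apply', ih, Dtot_smul]

theorem iter_add (f g : Fn N) (hf : IsLocal f) (hg : IsLocal g) (j : Fin N) (m : ℕ) :
    (Dtot j)^[m] (fun p => f p + g p) = fun p => (Dtot j)^[m] f p + (Dtot j)^[m] g p := by
  induction m with
  | zero => rfl
  | succ k ih =>
    rw [Function.iterate_succ_apply', Function.iterate_succ_apply', Function.iterate_succ_apply',
      ih, Dtot_add' (hf.iterD j k) (hg.iterD j k)]

theorem isLocal_lin (i : Fin N) (a : ℝ) : IsLocal (fun p : JetPt N => p.1 i - a) := by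
  refine ⟨∅, Loc.ofX (w := fun x => x i - a) ∅ ?_⟩
  exact ((ContinuousLinearMap.proj (R := ℝ) (φ := fun _ : Fin N => ℝ) i).contDiff).sub
    contDiff_const

theorem Dtot_linMul {f : Fn N} (hf : IsLocal f) (i : Fin N) (a : ℝ) (j : Fin N) :
    Dtot j (fun p => (p.1 i - a) * f p)
      = fun p => (p.1 i - a) * Dtot j f p + (if j = i then f p else 0) := by
  obtain ⟨S, hfS⟩ := isLocal_iff.1 hf
  funext p
  have hU : ∀ J : MI N, pderivU J (fun p => (p.1 i - a) * f p)
      = fun p => (p.1 i - a) * pderivU J f p :=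
    fun J => pderivU_xmul (fun x => x i - a) f J
  have hX : pderivX j (fun p => (p.1 i - a) * f p) p
      = (p.1 i - a) * pderivX j f p + (if j = i then f p else 0) := by
    by_cases h : j = i
    · subst h
      rw [if_pos rfl]
      have hline := hfS.hasDerivAt_lineX_self p j
      have hl : HasDerivAt (fun t : ℝ => t - a) 1 (p.1 j) := (hasDerivAt_id _).sub_const a
      have hmul : HasDerivAt (fun t => (t - a) * f (Function.update p.1 j t, p.2)) _ (p.1 j) := hl.mul hline
      have hfun : (fun t => ((Function.update p.1 j t) j - a) * f (Function.update p.1 j t, p.2))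
          = fun t => (t - a) * f (Function.update p.1 j t, p.2) := by
        funext t; rw [Function.update_self]
      show deriv (fun t => ((Function.update p.1 j t) j - a) * f (Function.update p.1 j t, p.2)) (p.1 j) = _
      rw [hfun, hmul.deriv, Function.update_eq_self, Prod.mk.eta]
      ring
    · rw [if_neg h, add_zero]
      have hfun : (fun t => ((Function.update p.1 j t) i - a) * f (Function.update p.1 j t, p.2))
          = fun t => (p.1 i - a) * f (Function.update p.1 j t, p.2) := by
        funext t
        rw [Function.update_of_ne (fun hc => h hc.symm)]
      show deriv (fun t => ((Function.update p.1 j t) i - a) * f (Function.update p.1 j t, p.2)) (p.1 j) = _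
      rw [hfun, deriv_const_mul_field]
      rfl
  rw [Dtot, Dtot, hX]
  simp only [hU]
  have hts : ∑' (J : MI N), p.2 (inc j J) * ((p.1 i - a) * pderivU J f p)
      = (p.1 i - a) * ∑' (J : MI N), p.2 (inc j J) * pderivU J f p := by
    rw [← tsum_mul_left]
    exact tsum_congr fun J => by ring
  rw [hts]
  ring

theorem iter_linMul {f : Fn N} (hf : IsLocal f) (i : Fin N) (a : ℝ) (j : Fin N) (m : ℕ) :
    (Dtot j)^[m] (fun p => (p.1 i - a) * f p)
      = fun p => (p.1 i - a) * ((Dtot j)^[m] f p)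
          + (if j = i then (m:ℝ) * ((Dtot j)^[m-1] f p) else 0) := by
  induction m with
  | zero => funext p; simp
  | succ k ih =>
    rw [Function.iterate_succ_apply', ih]
    have hA : IsLocal ((Dtot j)^[k] f) := hf.iterD j k
    have hB : IsLocal ((Dtot j)^[k-1] f) := hf.iterD j (k-1)
    by_cases h : j = i
    · subst h
      simp only [eq_self_iff_true, if_true]
      have hlA : IsLocal (fun p => (p.1 j - a) * (Dtot j)^[k] f p) :=
        (isLocal_lin j a).mul' hA
      have hsB : IsLocal (fun p => (k:ℝ) * (Dtot j)^[k-1] f p) := by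
        obtain ⟨S, hBS⟩ := isLocal_iff.1 hB
        exact ⟨S, (Loc.const S (k:ℝ)).mul hBS⟩
      rw [Dtot_add' hlA hsB j, Dtot_linMul hA j a j, Dtot_smul]
      funext p
      simp only [eq_self_iff_true, if_true]
      have h4 : (k:ℝ) * Dtot j ((Dtot j)^[k-1] f) p = (k:ℝ) * (Dtot j)^[k] f p := by
        cases k with
        | zero => simp
        | succ k' =>
          rw [Nat.add_sub_cancel, ← Function.iterate_succ_apply' (Dtot j) k' f]
      rw [h4, ← Function.iterate_succ_apply' (Dtot j) k f]
      rw [Nat.add_sub_cancel]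
      push_cast
      ring
    · simp only [if_neg h, add_zero]
      rw [Dtot_linMul hA i a j]
      funext p
      simp only [if_neg h, add_zero]
      rw [← Function.iterate_succ_apply' (Dtot j) k f]

/-- `DPow` along an explicit list of directions. -/
noncomputable def foldD (K : MI N) (l : List (Fin N)) : Fn N → Fn N :=
  l.foldr (fun i g => (Dtot i)^[K i] ∘ g) id

theorem DPow_eq_foldD (K : MI N) : (DPow K : Fn N → Fn N) = foldD K (List.finRange N) := rfl

theorem foldD_cons (K : MI N) (j : Fin N) (l : List (Fin N)) (f : Fn N) :
    foldD K (j :: l) f = (Dtot j)^[K j] (foldD K l f) := rfl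

theorem foldD_congr {K K' : MI N} (l : List (Fin N)) (h : ∀ i ∈ l, K i = K' i) (f : Fn N) :
    foldD K l f = foldD K' l f := by
  induction l with
  | nil => rfl
  | cons j l ih =>
    rw [foldD_cons, foldD_cons, ih (fun i hi => h i (List.mem_cons_of_mem j hi)),
      h j (List.mem_cons_self (a := j) (l := l))]

theorem IsLocal.foldD' {f : Fn N} (hf : IsLocal f) (K : MI N) (l : List (Fin N)) :
    IsLocal (foldD K l f) := by
  induction l with
  | nil => exact hf
  | cons j l ih => rw [foldD_cons]; exact ih.iterD j (K j)

theorem IsLocal.dpow {f : Fn N} (hf : IsLocal f) (K : MI N) : IsLocal (DPow K f) := by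
  rw [DPow_eq_foldD]; exact hf.foldD' K _

theorem iter_zero_fn (j : Fin N) (m : ℕ) : (Dtot j)^[m] (fun _ => (0:ℝ)) = fun _ => 0 := by
  induction m with
  | zero => rfl
  | succ k ih => rw [Function.iterate_succ_apply', ih, Dtot_zero_fn]

theorem foldD_zero_fn (K : MI N) (l : List (Fin N)) : foldD K l (fun _ => (0:ℝ)) = fun _ => 0 := by
  induction l with
  | nil => rfl
  | cons j l ih => rw [foldD_cons, ih, iter_zero_fn]

theorem DPow_zero_fn (K : MI N) : DPow K (fun _ => (0:ℝ)) = fun _ => 0 := by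
  rw [DPow_eq_foldD]; exact foldD_zero_fn K _

theorem foldD_zero_idx {K : MI N} (l : List (Fin N)) (h : ∀ i ∈ l, K i = 0) (f : Fn N) :
    foldD K l f = f := by
  induction l with
  | nil => rfl
  | cons j l ih =>
    rw [foldD_cons, ih (fun i hi => h i (List.mem_cons_of_mem j hi)), h j (List.mem_cons_self (a := j) (l := l))]
    rfl

theorem DPow_zero_idx (f : Fn N) : DPow (fun _ => 0 : MI N) f = f := by
  rw [DPow_eq_foldD]
  exact foldD_zero_idx _ (fun i _ => rfl) f

theorem foldD_smul (c : ℝ) (f : Fn N) (K : MI N) (l : List (Fin N)) :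
    foldD K l (fun p => c * f p) = fun p => c * foldD K l f p := by
  induction l with
  | nil => rfl
  | cons j l ih => rw [foldD_cons, ih, iter_smul]; rfl

theorem foldD_linMul_notmem {f : Fn N} (hf : IsLocal f) {i : Fin N} {l : List (Fin N)}
    (h : i ∉ l) (a : ℝ) (K : MI N) :
    foldD K l (fun p => (p.1 i - a) * f p) = fun p => (p.1 i - a) * foldD K l f p := by
  induction l with
  | nil => rfl
  | cons j l ih =>
    have hji : j ≠ i := fun hc => h (hc ▸ List.mem_cons_self (a := j) (l := l))
    rw [foldD_cons, ih (fun hc => h (List.mem_cons_of_mem j hc)),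
      iter_linMul (hf.foldD' K l) i a j (K j)]
    funext p
    simp only [if_neg hji, add_zero]
    rfl

theorem foldD_linMul {f : Fn N} (hf : IsLocal f) {i : Fin N} {l : List (Fin N)}
    (hnd : l.Nodup) (hmem : i ∈ l) (a : ℝ) (K : MI N) :
    foldD K l (fun p => (p.1 i - a) * f p)
      = fun p => (p.1 i - a) * foldD K l f p
          + (K i : ℝ) * foldD (Function.update K i (K i - 1)) l f p := by
  induction l with
  | nil => exact absurd hmem List.not_mem_nil
  | cons j l ih =>
    rw [foldD_cons]
    by_cases hji : j = i
    · subst hji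
      have hnl : j ∉ l := (List.nodup_cons.1 hnd).1
      rw [foldD_linMul_notmem hf hnl a K,
        iter_linMul (hf.foldD' K l) j a j (K j)]
      funext p
      simp only [eq_self_iff_true, if_true]
      have h1 : (Dtot j)^[K j] (foldD K l f) = foldD K (j :: l) f := rfl
      have h2 : (Dtot j)^[K j - 1] (foldD K l f)
          = foldD (Function.update K j (K j - 1)) (j :: l) f := by
        rw [foldD_cons, Function.update_self,
          foldD_congr l (fun i hi => (Function.update_of_ne (fun hc => hnl (by rw [hc] at hi; exact hi)) _ _).symm) f]
      rw [h1, h2]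
    · have hil : i ∈ l := by
        rcases List.mem_cons.1 hmem with hc | hc
        · exact absurd hc.symm hji
        · exact hc
      have hnd' : l.Nodup := (List.nodup_cons.1 hnd).2
      rw [ih hnd' hil]
      have hA : IsLocal (foldD K l f) := hf.foldD' K l
      have hB : IsLocal (foldD (Function.update K i (K i - 1)) l f) := hf.foldD' _ l
      have hlA : IsLocal (fun p => (p.1 i - a) * foldD K l f p) := (isLocal_lin i a).mul' hA
      have hsB : IsLocal (fun p => (K i : ℝ) * foldD (Function.update K i (K i - 1)) l f p) := by
        obtain ⟨S, hBS⟩ := isLocal_iff.1 hB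
        exact ⟨S, (Loc.const S _).mul hBS⟩
      rw [iter_add _ _ hlA hsB j (K j), iter_smul, iter_linMul hA i a j (K j)]
      funext p
      simp only [if_neg hji, add_zero]
      have h1 : (Dtot j)^[K j] (foldD K l f) = foldD K (j :: l) f := rfl
      have h2 : (Dtot j)^[K j] (foldD (Function.update K i (K i - 1)) l f)
          = foldD (Function.update K i (K i - 1)) (j :: l) f := by
        rw [foldD_cons, Function.update_of_ne hji]
      rw [h1, h2]

theorem DPow_linMul {f : Fn N} (hf : IsLocal f) (i : Fin N) (a : ℝ) (K : MI N) :
    DPow K (fun p => (p.1 i - a) * f p)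
      = fun p => (p.1 i - a) * DPow K f p
          + (K i : ℝ) * DPow (Function.update K i (K i - 1)) f p := by
  exact foldD_linMul hf (List.nodup_finRange N) (List.mem_finRange i) a K

/-- `UPow` along an explicit list. -/
noncomputable def foldU (α : MI N →₀ ℕ) (l : List (MI N)) : Fn N → Fn N :=
  l.foldr (fun J g => (pderivU J)^[α J] ∘ g) id

theorem UPow_eq_foldU (α : MI N →₀ ℕ) : (UPow α : Fn N → Fn N) = foldU α α.support.toList := rfl

theorem foldU_cons (α : MI N →₀ ℕ) (J : MI N) (l : List (MI N)) (f : Fn N) :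
    foldU α (J :: l) f = (pderivU J)^[α J] (foldU α l f) := rfl

theorem Loc.iterU {S : Finset (MI N)} {f : Fn N} (hf : Loc S f) (J : MI N) (m : ℕ) :
    Loc S ((pderivU J)^[m] f) := by
  induction m with
  | zero => exact hf
  | succ k ih => rw [Function.iterate_succ_apply']; exact ih.pdU J

theorem Loc.foldU' {S : Finset (MI N)} {f : Fn N} (hf : Loc S f) (α : MI N →₀ ℕ)
    (l : List (MI N)) : Loc S (foldU α l f) := by
  induction l with
  | nil => exact hf
  | cons J l ih => rw [foldU_cons]; exact ih.iterU J (α J)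

theorem Loc.upow {S : Finset (MI N)} {f : Fn N} (hf : Loc S f) (α : MI N →₀ ℕ) :
    Loc S (UPow α f) := by
  rw [UPow_eq_foldU]; exact hf.foldU' α _

theorem IsLocal.upow {f : Fn N} (hf : IsLocal f) (α : MI N →₀ ℕ) : IsLocal (UPow α f) := by
  obtain ⟨S, hf⟩ := isLocal_iff.1 hf; exact ⟨S, hf.upow α⟩

theorem iter_pdU_zero_fn (J : MI N) (m : ℕ) : (pderivU J)^[m] (fun _ => (0:ℝ)) = fun _ => 0 := by
  induction m with
  | zero => rfl
  | succ k ih => rw [Function.iterate_succ_apply', ih, pderivU_zero_fn]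

theorem foldU_zero_fn (α : MI N →₀ ℕ) (l : List (MI N)) :
    foldU α l (fun _ => (0:ℝ)) = fun _ => 0 := by
  induction l with
  | nil => rfl
  | cons J l ih => rw [foldU_cons, ih, iter_pdU_zero_fn]

theorem UPow_zero_fn (α : MI N →₀ ℕ) : UPow α (fun _ => (0:ℝ)) = fun _ => 0 := by
  rw [UPow_eq_foldU]; exact foldU_zero_fn α _

theorem foldU_eq_zero {S : Finset (MI N)} {f : Fn N} (hf : Loc S f) {α : MI N →₀ ℕ}
    {J₀ : MI N} {l : List (MI N)} (hmem : J₀ ∈ l) (hpos : 1 ≤ α J₀) (hJ₀ : J₀ ∉ S) :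
    foldU α l f = fun _ => 0 := by
  induction l with
  | nil => exact absurd hmem List.not_mem_nil
  | cons J l ih =>
    rw [foldU_cons]
    by_cases hJl : J₀ ∈ l
    · rw [ih hJl, iter_pdU_zero_fn]
    · have hJJ : J = J₀ := by
        rcases List.mem_cons.1 hmem with hc | hc
        · exact hc.symm
        · exact absurd hc hJl
      subst hJJ
      obtain ⟨k, hk⟩ : ∃ k, α J = k + 1 := ⟨α J - 1, by omega⟩
      rw [hk, Function.iterate_succ_apply, pderivU_eq_zero (hf.foldU' α l) hJ₀,
        iter_pdU_zero_fn]

theorem UPow_eq_zero {S : Finset (MI N)} {f : Fn N} (hf : Loc S f) {α : MI N →₀ ℕ}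
    {J₀ : MI N} (hmem : J₀ ∈ α.support) (hJ₀ : J₀ ∉ S) :
    UPow α f = fun _ => 0 := by
  rw [UPow_eq_foldU]
  exact foldU_eq_zero hf (Finset.mem_toList.2 hmem)
    (Nat.one_le_iff_ne_zero.2 (Finsupp.mem_support_iff.1 hmem)) hJ₀

theorem iter_pdU_xmul (v : (Fin N → ℝ) → ℝ) (f : Fn N) (J : MI N) (m : ℕ) :
    (pderivU J)^[m] (fun p => v p.1 * f p) = fun p => v p.1 * (pderivU J)^[m] f p := by
  induction m with
  | zero => rfl
  | succ k ih =>
    rw [Function.iterate_succ_apply', ih, pderivU_xmul]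
    simp only [← Function.iterate_succ_apply' (pderivU J) k]

theorem foldU_xmul (v : (Fin N → ℝ) → ℝ) (f : Fn N) (α : MI N →₀ ℕ) (l : List (MI N)) :
    foldU α l (fun p => v p.1 * f p) = fun p => v p.1 * foldU α l f p := by
  induction l with
  | nil => rfl
  | cons J l ih => rw [foldU_cons, ih, iter_pdU_xmul]; rfl

theorem UPow_xmul (v : (Fin N → ℝ) → ℝ) (f : Fn N) (α : MI N →₀ ℕ) :
    UPow α (fun p => v p.1 * f p) = fun p => v p.1 * UPow α f p := by
  exact foldU_xmul v f α _

theorem pderivU_sum {S : Finset (MI N)} {ι : Type*} (t : Finset ι) (F : ι → Fn N)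
    (h : ∀ r ∈ t, Loc S (F r)) (J : MI N) :
    pderivU J (fun p => ∑ r ∈ t, F r p) = fun p => ∑ r ∈ t, pderivU J (F r) p := by
  classical
  induction t using Finset.induction_on with
  | empty => simpa using pderivU_zero_fn J
  | insert a s hnotmem ih =>
    have h1 : pderivU J (fun p => F a p + ∑ r ∈ s, F r p)
        = fun p => pderivU J (F a) p + pderivU J (fun p => ∑ r ∈ s, F r p) p := by
      rw [pderivU_add (h a (Finset.mem_insert_self a s))
        (Loc.finsetSum s F fun r hr => h r (Finset.mem_insert_of_mem hr))]
    simp only [Finset.sum_insert hnotmem]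
    rw [h1, ih fun r hr => h r (Finset.mem_insert_of_mem hr)]

theorem iter_pdU_sum {S : Finset (MI N)} {ι : Type*} (t : Finset ι) (F : ι → Fn N)
    (h : ∀ r ∈ t, Loc S (F r)) (J : MI N) (m : ℕ) :
    (pderivU J)^[m] (fun p => ∑ r ∈ t, F r p) = fun p => ∑ r ∈ t, (pderivU J)^[m] (F r) p := by
  induction m with
  | zero => rfl
  | succ k ih =>
    rw [Function.iterate_succ_apply', ih,
      pderivU_sum t _ (fun r hr => (h r hr).iterU J k) J]
    simp only [← Function.iterate_succ_apply' (pderivU J) k]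

theorem foldU_sum {S : Finset (MI N)} {ι : Type*} (t : Finset ι) (F : ι → Fn N)
    (h : ∀ r ∈ t, Loc S (F r)) (α : MI N →₀ ℕ) (l : List (MI N)) :
    foldU α l (fun p => ∑ r ∈ t, F r p) = fun p => ∑ r ∈ t, foldU α l (F r) p := by
  induction l with
  | nil => rfl
  | cons J l ih =>
    rw [foldU_cons, ih, iter_pdU_sum t _ (fun r hr => (h r hr).foldU' α l) J (α J)]
    rfl

theorem UPow_sum {S : Finset (MI N)} {ι : Type*} (t : Finset ι) (F : ι → Fn N)
    (h : ∀ r ∈ t, Loc S (F r)) (α : MI N →₀ ℕ) :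
    UPow α (fun p => ∑ r ∈ t, F r p) = fun p => ∑ r ∈ t, UPow α (F r) p := by
  exact foldU_sum t F h α α.support.toList

theorem pderivU_monMul_ne {M J : MI N} (hJM : J ≠ M) (s : ℝ) (m : ℕ) (E : Fn N) :
    pderivU J (fun p => (p.2 M - s)^m * E p)
      = fun p => (p.2 M - s)^m * pderivU J E p := by
  funext p
  have hfun : (fun t => ((Function.update p.2 J t) M - s)^m * E (p.1, Function.update p.2 J t))
      = fun t => (p.2 M - s)^m * E (p.1, Function.update p.2 J t) := by
    funext t
    rw [Function.update_of_ne (fun hc => hJM hc.symm)]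
  show deriv (fun t => ((Function.update p.2 J t) M - s)^m * E (p.1, Function.update p.2 J t)) (p.2 J) = _
  rw [hfun, deriv_const_mul_field]
  rfl

theorem pderivU_monMul_self {S : Finset (MI N)} {E : Fn N} (hE : Loc S E) (M : MI N)
    (s : ℝ) (m : ℕ) (hm : 1 ≤ m) :
    pderivU M (fun p => (p.2 M - s)^m * E p)
      = fun p => (p.2 M - s)^(m-1) * ((m:ℝ) * E p + (p.2 M - s) * pderivU M E p) := by
  funext p
  have hline := hE.hasDerivAt_lineU_self p M
  have hpow : HasDerivAt (fun t : ℝ => (t - s)^m) ((m:ℝ) * (p.2 M - s)^(m-1) * 1) (p.2 M) := by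
    simpa using (show HasDerivAt (fun t : ℝ => (t - s)^m) ((m:ℝ) * (p.2 M - s)^(m-1) * 1) (p.2 M) from ((hasDerivAt_id (p.2 M)).sub_const s).pow m)
  have hmul : HasDerivAt (fun t => (t - s)^m * E (p.1, Function.update p.2 M t)) _ (p.2 M) := hpow.mul hline
  have hfun : (fun t => ((Function.update p.2 M t) M - s)^m * E (p.1, Function.update p.2 M t))
      = fun t => (t - s)^m * E (p.1, Function.update p.2 M t) := by
    funext t
    rw [Function.update_self]
  show deriv (fun t => ((Function.update p.2 M t) M - s)^m * E (p.1, Function.update p.2 M t)) (p.2 M) = _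
  rw [hfun, hmul.deriv, Function.update_eq_self, Prod.mk.eta]
  have hpows : (p.2 M - s)^m = (p.2 M - s)^(m-1) * (p.2 M - s) := by
    conv_lhs => rw [show m = (m-1) + 1 by omega]
    rw [pow_succ]
  rw [hpows]
  ring

theorem iter_pdU_monMul_ne {M J : MI N} (hJM : J ≠ M) (s : ℝ) (m k : ℕ) (E : Fn N) :
    (pderivU J)^[k] (fun p => (p.2 M - s)^m * E p)
      = fun p => (p.2 M - s)^m * (pderivU J)^[k] E p := by
  induction k with
  | zero => rfl
  | succ k' ih =>
    rw [Function.iterate_succ_apply', ih, pderivU_monMul_ne hJM]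
    simp only [← Function.iterate_succ_apply' (pderivU J) k']

theorem iter_pdU_monMul_self {S : Finset (MI N)} (hMS : (M : MI N) ∈ S) (s : ℝ) :
    ∀ (k m : ℕ), k ≤ m → ∀ E : Fn N, Loc S E →
      ∃ E' : Fn N, Loc S E' ∧
        (pderivU M)^[k] (fun p => (p.2 M - s)^m * E p)
          = fun p => (p.2 M - s)^(m-k) * E' p := by
  intro k
  induction k with
  | zero => exact fun m _ E hE => ⟨E, hE, rfl⟩
  | succ k' ih =>
    intro m hk E hE
    have hm1 : 1 ≤ m := by omega
    rw [Function.iterate_succ_apply, pderivU_monMul_self hE M s m hm1]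
    have hcoordsub : Loc S (fun p => p.2 M - s) := by
      simpa [sub_eq_add_neg] using (Loc.coord hMS).add (Loc.const S (-s))
    have hE1 : Loc S (fun p => (m:ℝ) * E p + (p.2 M - s) * pderivU M E p) :=
      ((Loc.const S (m:ℝ)).mul hE).add (hcoordsub.mul (hE.pdU M))
    obtain ⟨E', hE', heq⟩ := ih (m-1) (by omega) _ hE1
    refine ⟨E', hE', ?_⟩
    rw [heq, show m - 1 - k' = m - (k'+1) from by omega]

theorem foldU_monMul {S : Finset (MI N)} {α : MI N →₀ ℕ} {M : MI N} (hMS : M ∈ S) (s : ℝ) :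
    ∀ (l : List (MI N)), l.Nodup → ∀ (m : ℕ), (if M ∈ l then α M else 0) ≤ m →
      ∀ E : Fn N, Loc S E →
      ∃ E' : Fn N, Loc S E' ∧
        foldU α l (fun p => (p.2 M - s)^m * E p)
          = fun p => (p.2 M - s)^(m - (if M ∈ l then α M else 0)) * E' p := by
  intro l
  induction l with
  | nil =>
    intro _ m _ E hE
    exact ⟨E, hE, by simp [foldU]⟩
  | cons J l ih =>
    intro hnd m hbound E hE
    by_cases hJM : J = M
    · subst hJM
      have hnl : J ∉ l := (List.nodup_cons.1 hnd).1
      have hb' : (if J ∈ l then α J else 0) ≤ m := by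
        rw [if_neg hnl]; omega
      obtain ⟨E1, hE1, heq1⟩ := ih (List.nodup_cons.1 hnd).2 m hb' E hE
      rw [if_neg hnl, Nat.sub_zero] at heq1
      have hbm : α J ≤ m := by
        have := hbound
        rwa [if_pos (List.mem_cons_self (a := J) (l := l))] at this
      obtain ⟨E2, hE2, heq2⟩ := iter_pdU_monMul_self hMS s (α J) m hbm E1 hE1
      refine ⟨E2, hE2, ?_⟩
      rw [foldU_cons, heq1, heq2, if_pos (List.mem_cons_self (a := J) (l := l))]
    · have hmem_iff : (M ∈ J :: l) ↔ (M ∈ l) := by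
        constructor
        · intro h
          rcases List.mem_cons.1 h with hc | hc
          · exact absurd hc.symm hJM
          · exact hc
        · exact fun h => List.mem_cons_of_mem J h
      have hb' : (if M ∈ l then α M else 0) ≤ m := by
        by_cases hml : M ∈ l
        · rw [if_pos hml]
          have := hbound
          rwa [if_pos (hmem_iff.2 hml)] at this
        · rw [if_neg hml]; omega
      obtain ⟨E1, hE1, heq1⟩ := ih (List.nodup_cons.1 hnd).2 m hb' E hE
      refine ⟨(pderivU J)^[α J] E1, hE1.iterU J (α J), ?_⟩
      rw [foldU_cons, heq1, iter_pdU_monMul_ne hJM]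
      by_cases hml : M ∈ l
      · rw [if_pos hml, if_pos (hmem_iff.2 hml)]
      · rw [if_neg hml, if_neg (fun hc => hml (hmem_iff.1 hc))]

theorem UPow_monMul_eval {S : Finset (MI N)} {α : MI N →₀ ℕ} {M : MI N} {f : Fn N}
    (hMS : M ∈ S) (hf : Loc S f) {d : ℕ} (hα : α M ≤ d) (s : ℝ)
    (p : JetPt N) (hp : p.2 M = s) :
    UPow α (fun q => (q.2 M - s)^(d+1) * f q) p = 0 := by
  have hb : (if M ∈ α.support.toList then α M else 0) ≤ d + 1 := by
    by_cases h : M ∈ α.support.toList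
    · rw [if_pos h]; omega
    · rw [if_neg h]; omega
  obtain ⟨E', hE', heq⟩ := foldU_monMul hMS s α.support.toList (Finset.nodup_toList _)
    (d+1) hb f hf
  rw [UPow_eq_foldU, heq]
  have hexp : 1 ≤ d + 1 - (if M ∈ α.support.toList then α M else 0) := by
    by_cases h : M ∈ α.support.toList
    · rw [if_pos h]; omega
    · rw [if_neg h]; omega
  show (p.2 M - s)^(d+1 - _) * E' p = 0
  rw [hp, sub_self, zero_pow (by omega), zero_mul]

theorem DPow_zero_idx' (f : Fn N) : DPow (0 : MI N) f = f := by
  rw [DPow_eq_foldD]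
  exact foldD_zero_idx _ (fun i _ => rfl) f

theorem IsLocal.finsetSum' {ι : Type*} (t : Finset ι) (F : ι → Fn N)
    (h : ∀ j ∈ t, IsLocal (F j)) : IsLocal (fun p => ∑ j ∈ t, F j p) := by
  classical
  induction t using Finset.induction_on with
  | empty => exact ⟨∅, fun _ => 0, contDiff_const, fun p => by simp⟩
  | insert a s hnotmem ih =>
    have h1 : IsLocal (fun p => F a p + ∑ j ∈ s, F j p) :=
      (h a (Finset.mem_insert_self a s)).add' (ih fun j hj => h j (Finset.mem_insert_of_mem hj))
    simpa [Finset.sum_insert hnotmem] using h1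

theorem IsLocal.finsetProd' {ι : Type*} (t : Finset ι) (F : ι → Fn N)
    (h : ∀ j ∈ t, IsLocal (F j)) : IsLocal (fun p => ∏ j ∈ t, F j p) := by
  classical
  induction t using Finset.induction_on with
  | empty => exact ⟨∅, fun _ => 1, contDiff_const, fun p => by simp⟩
  | insert a s hnotmem ih =>
    have h1 : IsLocal (fun p => F a p * ∏ j ∈ s, F j p) :=
      (h a (Finset.mem_insert_self a s)).mul' (ih fun j hj => h j (Finset.mem_insert_of_mem hj))
    simpa [Finset.prod_insert hnotmem] using h1

section RealizeP

variable {n : ℕ} [NeZero n]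

/-- the product part of a polarized term, with the (vanishing) outer total
derivatives removed -/
noncomputable def prodF (f : Fin n → Fn N) (Iα : Idx N n) : Fn N :=
  fun p => ∏ j, if j = (0 : Fin n) then UPow (Iα.2 j) (f j) p
    else DPow (Iα.1 j) (UPow (Iα.2 j) (f j)) p

theorem realizeP_eq_tsum {q : OpData N n} (h0 : ∀ Iα : Idx N n, Iα.1 0 ≠ 0 → q Iα = 0)
    (f : Fin n → Fn N) (pt : JetPt N) :
    realizeP q f pt = ∑' Iα : Idx N n, q Iα pt * prodF f Iα pt := by
  rw [realizeP]
  refine tsum_congr fun Iα => ?_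
  by_cases h : Iα.1 0 = 0
  · rw [h, DPow_zero_idx']
    rfl
  · rw [h0 Iα h]
    show (0 : Fn N) pt * _ = (0 : Fn N) pt * _
    simp

/-- maximal weight of a finite set of multi-indices -/
def mS (S : Finset (MI N)) : ℕ := S.sup fun J => ∑ i, J i

theorem prodF_eq_zero {f : Fin n → Fn N} {S : Fin n → Finset (MI N)}
    (hf : ∀ j, Loc (S j) (f j)) {Iα : Idx N n}
    (h : ¬ (∑ j, degf (Iα.2 j)) ≤ ∑ j, mS (S j)) (pt : JetPt N) : prodF f Iα pt = 0 := by
  have hj : ∃ j, ¬ degf (Iα.2 j) ≤ mS (S j) := by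
    by_contra hc
    push_neg at hc
    exact h (Finset.sum_le_sum fun j _ => hc j)
  obtain ⟨j, hj⟩ := hj
  have hne : (Iα.2 j).support.Nonempty := by
    by_contra hc
    rw [Finset.not_nonempty_iff_eq_empty] at hc
    refine hj ?_
    rw [degf, hc]
    simp
  obtain ⟨J, hJmem, hJeq⟩ := Finset.exists_mem_eq_sup _ hne fun J => ∑ i, J i
  have hJS : J ∉ S j := by
    intro hc
    refine hj ?_
    rw [degf, hJeq]
    exact Finset.le_sup (f := fun J => ∑ i, J i) hc
  have hU : UPow (Iα.2 j) (f j) = fun _ => 0 := UPow_eq_zero (hf j) hJmem hJS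
  refine Finset.prod_eq_zero (Finset.mem_univ j) ?_
  by_cases hj0 : j = 0
  · rw [if_pos hj0, hU]
  · rw [if_neg hj0, hU, DPow_zero_fn]

theorem realizeP_eq_sum {q : OpData N n} (hq : Good q)
    (h0 : ∀ Iα : Idx N n, Iα.1 0 ≠ 0 → q Iα = 0) {f : Fin n → Fn N}
    {S : Fin n → Finset (MI N)} (hf : ∀ j, Loc (S j) (f j)) {m : ℕ}
    (hm : ∑ j, mS (S j) ≤ m) (pt : JetPt N) :
    realizeP q f pt = ∑ Iα ∈ (hq.2 m).toFinset, q Iα pt * prodF f Iα pt := by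
  rw [realizeP_eq_tsum h0 f pt]
  refine tsum_eq_sum fun Iα hIα => ?_
  by_cases hq0 : q Iα = 0
  · rw [hq0]
    show (0 : Fn N) pt * _ = 0
    simp
  · have h1 : ¬ ∑ j, degf (Iα.2 j) ≤ m := fun hc => hIα ((hq.2 m).mem_toFinset.2 ⟨hq0, hc⟩)
    have h2 : ¬ (∑ j, degf (Iα.2 j)) ≤ ∑ j, mS (S j) := fun hc => h1 (hc.trans hm)
    rw [prodF_eq_zero hf h2 pt, mul_zero]

theorem prodF_isLocal {f : Fin n → Fn N} (hf : LocalTuple f) (Iα : Idx N n) :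
    IsLocal (prodF f Iα) := by
  refine IsLocal.finsetProd' Finset.univ _ fun j _ => ?_
  by_cases hj0 : j = 0
  · simp only [if_pos hj0]
    exact (hf j).upow _
  · simp only [if_neg hj0]
    exact ((hf j).upow _).dpow _

theorem realizeP_isLocal {q : OpData N n} (hq : Good q)
    (h0 : ∀ Iα : Idx N n, Iα.1 0 ≠ 0 → q Iα = 0) {f : Fin n → Fn N}
    (hf : LocalTuple f) : IsLocal (realizeP q f) := by
  choose S hS using fun j => isLocal_iff.1 (hf j)
  have heq : realizeP q f = fun pt => ∑ Iα ∈ ((hq.2 (∑ j, mS (S j))).toFinset),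
      q Iα pt * prodF f Iα pt := funext fun pt => realizeP_eq_sum hq h0 hS le_rfl pt
  rw [heq]
  exact IsLocal.finsetSum' _ _ fun Iα _ => (hq.1 Iα).mul' (prodF_isLocal hf Iα)

theorem prodF_update0 {f : Fin n → Fn N} (g₀ : Fn N) (Iα : Idx N n) (pt : JetPt N) :
    prodF (Function.update f 0 g₀) Iα pt
      = UPow (Iα.2 0) g₀ pt * ∏ j ∈ Finset.univ.erase (0 : Fin n),
          DPow (Iα.1 j) (UPow (Iα.2 j) (f j)) pt := by
  rw [prodF, ← Finset.mul_prod_erase Finset.univ _ (Finset.mem_univ (0 : Fin n)),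
    if_pos rfl, Function.update_self]
  congr 1
  refine Finset.prod_congr rfl fun j hj => ?_
  have hj0 : j ≠ 0 := Finset.ne_of_mem_erase hj
  rw [if_neg hj0, Function.update_of_ne hj0]

theorem prodF_self {f : Fin n → Fn N} (Iα : Idx N n) (pt : JetPt N) :
    prodF f Iα pt
      = UPow (Iα.2 0) (f 0) pt * ∏ j ∈ Finset.univ.erase (0 : Fin n),
          DPow (Iα.1 j) (UPow (Iα.2 j) (f j)) pt := by
  rw [prodF, ← Finset.mul_prod_erase Finset.univ _ (Finset.mem_univ (0 : Fin n)), if_pos rfl]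
  congr 1
  refine Finset.prod_congr rfl fun j hj => ?_
  rw [if_neg (Finset.ne_of_mem_erase hj)]

theorem realizeP_xmul {q : OpData N n} (h0 : ∀ Iα : Idx N n, Iα.1 0 ≠ 0 → q Iα = 0)
    (f : Fin n → Fn N) (w : (Fin N → ℝ) → ℝ) (pt : JetPt N) :
    realizeP q (Function.update f 0 (fun p => w p.1 * f 0 p)) pt
      = w pt.1 * realizeP q f pt := by
  rw [realizeP_eq_tsum h0 _ pt, realizeP_eq_tsum h0 f pt, ← tsum_mul_left]
  refine tsum_congr fun Iα => ?_
  rw [prodF_update0, prodF_self, UPow_xmul]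
  ring
end RealizeP

theorem euler_eq_sum {S : Finset (MI N)} {L : Fn N} (hL : Loc S L) (pt : JetPt N) :
    Euler L pt = ∑ K ∈ S, (-1:ℝ)^(∑ i, K i) * DPow K (pderivU K L) pt := by
  rw [Euler]
  refine tsum_eq_sum fun K hK => ?_
  rw [pderivU_eq_zero hL hK, DPow_zero_fn]
  simp

/-- higher Euler operators (relative to a fixed dependency set `S`) -/
noncomputable def Phi (S : Finset (MI N)) (β : MI N) (F : Fn N) : Fn N :=
  fun pt => ∑ K ∈ S,
    ((-1:ℝ)^(∑ i, K i) * ((∏ j, (K j).descFactorial (β j) : ℕ) : ℝ))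
      * DPow (fun j => K j - β j) (pderivU K F) pt

theorem euler_eq_phi_zero {S : Finset (MI N)} {L : Fn N} (hL : Loc S L) (pt : JetPt N) :
    Euler L pt = Phi S (fun _ => 0) L pt := by
  rw [euler_eq_sum hL pt, Phi]
  refine Finset.sum_congr rfl fun K _ => ?_
  have h1 : (fun j => K j - (fun _ => 0 : MI N) j) = K := funext fun j => rfl
  have h2 : (∏ j, (K j).descFactorial ((fun _ => 0 : MI N) j)) = 1 := by
    simp [Nat.descFactorial]
  rw [h1, h2]
  norm_num

theorem phi_linMul {S : Finset (MI N)} {F : Fn N} (hF : Loc S F) (β : MI N) (i : Fin N)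
    (a : ℝ) (pt : JetPt N) :
    Phi S β (fun p => (p.1 i - a) * F p) pt
      = (pt.1 i - a) * Phi S β F pt
        + Phi S (Function.update β i (β i + 1)) F pt := by
  rw [Phi, Phi, Phi, Finset.mul_sum, ← Finset.sum_add_distrib]
  refine Finset.sum_congr rfl fun K _ => ?_
  have hU : pderivU K (fun p => (p.1 i - a) * F p) = fun p => (p.1 i - a) * pderivU K F p :=
    pderivU_xmul (fun x => x i - a) F K
  rw [hU, DPow_linMul ((hF.pdU K).isLocal) i a (fun j => K j - β j)]
  have hidx : Function.update (fun j => K j - β j) i ((fun j => K j - β j) i - 1)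
      = fun j => K j - (Function.update β i (β i + 1)) j := by
    funext j
    by_cases hj : j = i
    · subst hj
      rw [Function.update_self, Function.update_self]
      show K j - β j - 1 = K j - (β j + 1)
      omega
    · rw [Function.update_of_ne hj, Function.update_of_ne hj]
  have hcoef : (∏ j, (K j).descFactorial ((Function.update β i (β i + 1)) j))
      = (K i - β i) * ∏ j, (K j).descFactorial (β j) := by
    rw [← Finset.mul_prod_erase Finset.univ
        (fun j => (K j).descFactorial ((Function.update β i (β i + 1)) j)) (Finset.mem_univ i),
      ← Finset.mul_prod_erase Finset.univ
        (fun j => (K j).descFactorial (β j)) (Finset.mem_univ i),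
      Function.update_self, Nat.descFactorial_succ]
    have hpr : (∏ x ∈ Finset.univ.erase i,
        (K x).descFactorial ((Function.update β i (β i + 1)) x))
        = ∏ x ∈ Finset.univ.erase i, (K x).descFactorial (β x) :=
      Finset.prod_congr rfl fun j hj => by
        rw [Function.update_of_ne (Finset.ne_of_mem_erase hj)]
    rw [hpr]
    ring
  rw [hidx, hcoef]
  push_cast
  ring

theorem step2 {n : ℕ} [NeZero n] {q : OpData N n} (hq : Good q)
    (h0 : ∀ Iα : Idx N n, Iα.1 0 ≠ 0 → q Iα = 0)
    (hE : ∀ f, LocalTuple f → ∀ pt, Euler (realizeP q f) pt = 0)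
    {f : Fin n → Fn N} (hf : LocalTuple f) :
    ∀ (K : MI N) (pt : JetPt N), pderivU K (realizeP q f) pt = 0 := by
  classical
  obtain ⟨S, hLS⟩ := isLocal_iff.1 (realizeP_isLocal hq h0 hf)
  set L := realizeP q f with hLdef
  have key : ∀ (m : ℕ) (β : MI N), (∑ i, β i) = m →
      ∀ w : (Fin N → ℝ) → ℝ, ContDiff ℝ (⊤ : ℕ∞) w → ∀ pt,
        Phi S β (fun p => w p.1 * L p) pt = 0 := by
    intro m
    induction m with
    | zero =>
      intro β hβ w hw pt
      have hβ0 : β = fun _ => 0 := by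
        funext i
        exact (Finset.sum_eq_zero_iff).1 hβ i (Finset.mem_univ i)
      rw [hβ0]
      have hwL : Loc S (fun p => w p.1 * L p) := (Loc.ofX S hw).mul hLS
      rw [← euler_eq_phi_zero hwL pt]
      have htup : LocalTuple (Function.update f 0 (fun p => w p.1 * f 0 p)) := by
        intro j
        by_cases hj : j = 0
        · subst hj
          rw [Function.update_self]
          obtain ⟨S0, h⟩ := isLocal_iff.1 (hf 0)
          exact ⟨S0, (Loc.ofX S0 hw).mul h⟩
        · rw [Function.update_of_ne hj]
          exact hf j
      have heq : (fun p => w p.1 * L p)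
          = realizeP q (Function.update f 0 (fun p => w p.1 * f 0 p)) :=
        funext fun pt' => (realizeP_xmul h0 f w pt').symm
      rw [heq]
      exact hE _ htup pt
    | succ m ih =>
      intro β hβ w hw pt
      have hex : ∃ i, β i ≠ 0 := by
        by_contra hc
        push_neg at hc
        rw [Finset.sum_eq_zero (fun i _ => hc i)] at hβ
        exact Nat.succ_ne_zero m hβ.symm
      obtain ⟨i, hi⟩ := hex
      set β' := Function.update β i (β i - 1) with hβ'def
      have hupd : Function.update β' i (β' i + 1) = β := by
        funext k
        by_cases hk : k = i
        · subst hk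
          rw [Function.update_self]
          show Function.update β k (β k - 1) k + 1 = β k
          rw [Function.update_self]
          omega
        · rw [Function.update_of_ne hk]
          show Function.update β i (β i - 1) k = β k
          rw [Function.update_of_ne hk]
      have hsum' : (∑ j, β' j) = m := by
        have h1 : ∑ j, β' j = (β i - 1) + ∑ j ∈ Finset.univ.erase i, β j := by
          rw [← Finset.add_sum_erase Finset.univ β' (Finset.mem_univ i)]
          congr 1
          · show Function.update β i (β i - 1) i = β i - 1
            rw [Function.update_self]
          · exact Finset.sum_congr rfl fun j hj => by
              show Function.update β i (β i - 1) j = β j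
              rw [Function.update_of_ne (Finset.ne_of_mem_erase hj)]
        have h2 : β i + ∑ j ∈ Finset.univ.erase i, β j = m + 1 := by
          rw [Finset.add_sum_erase Finset.univ β (Finset.mem_univ i)]
          exact hβ
        omega
      have hw' : ContDiff ℝ (⊤ : ℕ∞) (fun x : Fin N → ℝ => (x i - pt.1 i) * w x) :=
        (((ContinuousLinearMap.proj (R := ℝ) (φ := fun _ : Fin N => ℝ) i).contDiff).sub
          contDiff_const).mul hw
      have h1 := ih β' hsum' _ hw' pt
      have heq2 : (fun p : JetPt N => (fun x : Fin N → ℝ => (x i - pt.1 i) * w x) p.1 * L p)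
          = fun p => (p.1 i - pt.1 i) * ((fun p : JetPt N => w p.1 * L p) p) := by
        funext p
        ring
      rw [heq2, phi_linMul ((Loc.ofX S hw).mul hLS) β' i (pt.1 i) pt, sub_self, zero_mul,
        zero_add, hupd] at h1
      exact h1
  intro K pt
  by_contra hKpt
  set T := S.filter (fun K => ¬ ∀ pt, pderivU K L pt = 0) with hT
  have hKT : K ∈ T := by
    refine Finset.mem_filter.2 ⟨?_, fun hc => hKpt (hc pt)⟩
    by_contra hKS
    exact hKpt (by rw [pderivU_eq_zero hLS hKS])
  obtain ⟨K₀, hK₀T, hmax⟩ := Finset.exists_max_image T (fun K => ∑ i, K i) ⟨K, hKT⟩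
  have hK₀ : ¬ ∀ pt, pderivU K₀ L pt = 0 := (Finset.mem_filter.1 hK₀T).2
  push_neg at hK₀
  obtain ⟨pt₀, hpt₀⟩ := hK₀
  have h1 := key (∑ i, K₀ i) K₀ rfl (fun _ => 1) contDiff_const pt₀
  have heq : (fun p : JetPt N => (fun _ : Fin N → ℝ => (1:ℝ)) p.1 * L p) = L := by
    funext p
    show 1 * L p = L p
    ring
  rw [heq] at h1
  rw [Phi] at h1
  rw [Finset.sum_eq_single K₀] at h1
  · have hidx0 : (fun j => K₀ j - K₀ j) = (0 : MI N) := by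
      funext j
      exact Nat.sub_self (K₀ j)
    rw [hidx0, DPow_zero_idx'] at h1
    have hc0 : ((-1:ℝ)^(∑ i, K₀ i) * ((∏ j, (K₀ j).descFactorial (K₀ j) : ℕ) : ℝ)) ≠ 0 := by
      refine mul_ne_zero (pow_ne_zero _ (by norm_num)) ?_
      rw [Nat.cast_ne_zero]
      have hpos : 0 < ∏ j, (K₀ j).descFactorial (K₀ j) :=
        Finset.prod_pos fun j _ => by
          rw [Nat.descFactorial_self]
          exact Nat.factorial_pos _
      omega
    exact hpt₀ ((mul_eq_zero.1 h1).resolve_left hc0)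
  · intro K' hK'S hK'ne
    by_cases hzero : ∀ pt, pderivU K' L pt = 0
    · have : pderivU K' L = fun _ => 0 := funext hzero
      rw [this, DPow_zero_fn]
      simp
    · have hK'T : K' ∈ T := Finset.mem_filter.2 ⟨hK'S, hzero⟩
      have hlt : ∃ j, K' j < K₀ j := by
        by_contra hc
        push_neg at hc
        have hle : ∑ i, K' i ≤ ∑ i, K₀ i := hmax K' hK'T
        have hge : ∀ j, K₀ j ≤ K' j := hc
        have heqK : K' = K₀ := by
          funext j
          have h3 : ∑ i, K₀ i ≤ ∑ i, K' i := Finset.sum_le_sum fun j _ => hge j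
          have h4 : ∑ i, K' i = ∑ i, K₀ i := le_antisymm hle h3
          by_contra hne
          have hlt2 : K₀ j < K' j := lt_of_le_of_ne (hge j) (fun hc2 => hne hc2.symm)
          have : ∑ i, K₀ i < ∑ i, K' i :=
            Finset.sum_lt_sum (fun j _ => hge j) ⟨j, Finset.mem_univ j, hlt2⟩
          omega
        exact hK'ne heqK
      obtain ⟨j, hj⟩ := hlt
      have hdesc : (K' j).descFactorial (K₀ j) = 0 :=
        Nat.descFactorial_eq_zero_iff_lt.2 hj
      have hprod : (∏ j', (K' j').descFactorial (K₀ j')) = 0 :=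
        Finset.prod_eq_zero (Finset.mem_univ j) hdesc
      rw [hprod]
      simp
  · intro hK₀S
    exact absurd (Finset.mem_filter.1 hK₀T).1 hK₀S

theorem Loc.monpow {S : Finset (MI N)} {M : MI N} (hM : M ∈ S) (s : ℝ) (k : ℕ) :
    Loc S (fun p => (p.2 M - s)^k) := by
  have hbase : Loc S (fun p => p.2 M - s) := by
    simpa [sub_eq_add_neg] using (Loc.coord hM).add (Loc.const S (-s))
  induction k with
  | zero => simpa using Loc.const S 1
  | succ k ih =>
    have h2 := ih.mul hbase
    have h3 : (fun p : JetPt N => (p.2 M - s)^k * (p.2 M - s))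
        = fun p => (p.2 M - s)^(k+1) := by
      funext p
      rw [pow_succ]
    rwa [h3] at h2

theorem main_forward {n : ℕ} [NeZero n] {q : OpData N n} (hq : Good q)
    (h0 : ∀ Iα : Idx N n, Iα.1 0 ≠ 0 → q Iα = 0)
    (hE : ∀ f, LocalTuple f → ∀ pt, Euler (realizeP q f) pt = 0) :
    ∀ f, LocalTuple f → ∀ pt, realizeP q f pt = 0 := by
  classical
  intro f hf pt
  choose S hS using fun j => isLocal_iff.1 (hf j)
  set M : MI N := fun _ => 0 with hM
  set S' : Fin n → Finset (MI N) := fun j => insert M (S j) with hS'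
  have hS'loc : ∀ j, Loc (S' j) (f j) := fun j => (hS j).mono (Finset.subset_insert M (S j))
  have hMS : ∀ j, M ∈ S' j := fun j => Finset.mem_insert_self M (S j)
  set mstar : ℕ := ∑ j, mS (S' j) with hmstar
  set F : Finset (Idx N n) := (hq.2 mstar).toFinset with hF
  set d : ℕ := F.sup (fun Iα => Iα.2 0 M) with hd
  -- the auxiliary tuples
  set Hf : ℕ → Fn N := fun r => fun p => (p.2 M)^r * f 0 p with hHf
  have hHfloc : ∀ r, Loc (S' 0) (Hf r) := by
    intro r
    have h1 : Loc (S' 0) (fun p => ((p.2 M - 0)^r) * f 0 p) :=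
      (Loc.monpow (hMS 0) 0 r).mul (hS'loc 0)
    simpa [hHf] using h1
  set RR : Idx N n → ℝ := fun Iα => ∏ j ∈ Finset.univ.erase (0 : Fin n),
      DPow (Iα.1 j) (UPow (Iα.2 j) (f j)) pt with hRR
  set bb : ℕ → ℝ := fun r => ∑ Iα ∈ F, q Iα pt * (UPow (Iα.2 0) (Hf r) pt * RR Iα) with hbb
  -- per-s tuple
  have key : ∀ s : ℝ,
      ∑ r ∈ Finset.range (d+2),
        ((-1:ℝ)^(d+1-r) * ((d+1).choose r : ℝ) * bb r) * s^(d+1-r) = 0 := by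
    intro s
    set g₀ : Fn N := fun p => (p.2 M - s)^(d+1) * f 0 p with hg₀
    set g : Fin n → Fn N := Function.update f 0 g₀ with hg
    have hgloc : ∀ j, Loc (S' j) (g j) := by
      intro j
      by_cases hj : j = 0
      · subst hj
        rw [hg, Function.update_self]
        exact (Loc.monpow (hMS 0) s (d+1)).mul (hS'loc 0)
      · rw [hg, Function.update_of_ne hj]
        exact hS'loc j
    have hgtup : LocalTuple g := fun j => ⟨S' j, hgloc j⟩
    -- value at the shifted point is 0
    set pts : JetPt N := (pt.1, Function.update pt.2 M s) with hpts
    have hzero_at_pts : realizeP q g pts = 0 := by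
      rw [realizeP_eq_sum hq h0 hgloc le_rfl pts]
      refine Finset.sum_eq_zero fun Iα hIα => ?_
      have hαd : Iα.2 0 M ≤ d := Finset.le_sup (f := fun Iα : Idx N n => Iα.2 0 M) hIα
      have hUz : UPow (Iα.2 0) g₀ pts = 0 := by
        refine UPow_monMul_eval (hMS 0) (hS'loc 0) hαd s pts ?_
        rw [hpts]
        show Function.update pt.2 M s M = s
        rw [Function.update_self]
      rw [prodF_update0]
      rw [hUz]   -- term has factor 0
      simp
    -- constancy along the u_M line
    have hconst : realizeP q g pt = realizeP q g pts := by
      obtain ⟨Sg, hSg⟩ := isLocal_iff.1 (realizeP_isLocal hq h0 hgtup)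
      have hdiff : Differentiable ℝ (fun t => realizeP q g (pt.1, Function.update pt.2 M t)) :=
        fun t => (hSg.hasDerivAt_lineU pt M t).differentiableAt
      have hdz : ∀ t, deriv (fun t => realizeP q g (pt.1, Function.update pt.2 M t)) t = 0 := by
        intro t
        rw [(hSg.hasDerivAt_lineU pt M t).deriv]
        exact step2 hq h0 hE hgtup M _
      have hcst := is_const_of_deriv_eq_zero hdiff hdz (pt.2 M) s
      rw [Function.update_eq_self, Prod.mk.eta] at hcst
      exact hcst
    have hzero_at_pt : realizeP q g pt = 0 := hconst.trans hzero_at_pts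
    -- expand in powers of s
    have hg0exp : g₀ = fun p => ∑ r ∈ Finset.range (d+2),
        (fun _ : Fin N → ℝ => (-s)^(d+1-r) * ((d+1).choose r : ℝ)) p.1 * Hf r p := by
      funext p
      show (p.2 M - s)^(d+1) * f 0 p = _
      rw [sub_eq_add_neg, add_pow, Finset.sum_mul]
      refine Finset.sum_congr rfl fun r _ => ?_
      show p.2 M ^ r * (-s)^(d+1-r) * ((d+1).choose r : ℝ) * f 0 p = _
      rw [hHf]
      ring
    have hUPexp : ∀ Iα : Idx N n, UPow (Iα.2 0) g₀ pt
        = ∑ r ∈ Finset.range (d+2),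
            ((-s)^(d+1-r) * ((d+1).choose r : ℝ)) * UPow (Iα.2 0) (Hf r) pt := by
      intro Iα
      rw [hg0exp, UPow_sum (S := S' 0) _ _ fun r _ =>
        (Loc.ofX (S' 0) contDiff_const).mul (hHfloc r)]
      refine Finset.sum_congr rfl fun r _ => ?_
      exact congrFun (UPow_xmul (fun _ : Fin N → ℝ => (-s)^(d+1-r) * ((d+1).choose r : ℝ))
        (Hf r) (Iα.2 0)) pt
    -- assemble
    have hsum : realizeP q g pt = ∑ r ∈ Finset.range (d+2),
        ((-s)^(d+1-r) * ((d+1).choose r : ℝ)) * bb r := by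
      rw [realizeP_eq_sum hq h0 hgloc le_rfl pt]
      have h1 : ∀ Iα ∈ F, q Iα pt * prodF g Iα pt
          = ∑ r ∈ Finset.range (d+2),
              ((-s)^(d+1-r) * ((d+1).choose r : ℝ))
                * (q Iα pt * (UPow (Iα.2 0) (Hf r) pt * RR Iα)) := by
        intro Iα _
        rw [hg, prodF_update0, hUPexp Iα, Finset.sum_mul, Finset.mul_sum]
        refine Finset.sum_congr rfl fun r _ => ?_
        rw [hRR]
        ring
      rw [Finset.sum_congr rfl h1, Finset.sum_comm]
      refine Finset.sum_congr rfl fun r _ => ?_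
      rw [hbb, Finset.mul_sum]
    rw [hsum] at hzero_at_pt
    rw [← hzero_at_pt]
    refine Finset.sum_congr rfl fun r _ => ?_
    rw [neg_pow]
    ring
  -- polynomial extraction
  set P : Polynomial ℝ := ∑ r ∈ Finset.range (d+2),
      Polynomial.C ((-1:ℝ)^(d+1-r) * ((d+1).choose r : ℝ) * bb r) * Polynomial.X^(d+1-r)
    with hP
  have hev : ∀ s : ℝ, P.eval s = 0 := by
    intro s
    rw [hP, Polynomial.eval_finset_sum]
    simpa [Polynomial.eval_mul, Polynomial.eval_pow] using key s
  have hP0 : P = 0 := Polynomial.funext fun s => by rw [hev s, Polynomial.eval_zero]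
  have hco : P.coeff (d+1) = 0 := by rw [hP0, Polynomial.coeff_zero]
  rw [hP, Polynomial.finset_sum_coeff] at hco
  have hco2 : ∑ r ∈ Finset.range (d+2),
      ((-1:ℝ)^(d+1-r) * ((d+1).choose r : ℝ) * bb r) * (if d+1 = d+1-r then 1 else 0) = 0 := by
    have hstep : ∀ r ∈ Finset.range (d+2),
        (Polynomial.C ((-1:ℝ)^(d+1-r) * ((d+1).choose r : ℝ) * bb r)
          * Polynomial.X^(d+1-r)).coeff (d+1)
        = ((-1:ℝ)^(d+1-r) * ((d+1).choose r : ℝ) * bb r) * (if d+1 = d+1-r then 1 else 0) := by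
      intro r _
      rw [Polynomial.coeff_C_mul, Polynomial.coeff_X_pow]
    rw [Finset.sum_congr rfl hstep] at hco
    exact hco
  rw [Finset.sum_eq_single 0] at hco2
  · have h1 : ((-1:ℝ)^(d+1) * ((d+1).choose 0 : ℝ) * bb 0) = 0 := by
      simpa using hco2
    have h2 : bb 0 = 0 := by
      have hne : ((-1:ℝ)^(d+1) * ((d+1).choose 0 : ℝ)) ≠ 0 := by
        simp
      exact (mul_eq_zero.1 h1).resolve_left hne
    -- bb 0 = realizeP q f pt
    have hbb0 : bb 0 = realizeP q f pt := by
      rw [hbb, realizeP_eq_sum hq h0 hS'loc le_rfl pt]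
      refine Finset.sum_congr rfl fun Iα _ => ?_
      rw [prodF_self, hRR]
      have hH0 : Hf 0 = f 0 := by
        funext p
        rw [hHf]
        show (p.2 M)^0 * f 0 p = f 0 p
        ring
      rw [hH0]
    rw [← hbb0, h2]
  · intro r hr hr0
    have : ¬ (d+1 = d+1-r) := by
      have hrle : r < d+2 := Finset.mem_range.1 hr
      omega
    rw [if_neg this, mul_zero]
  · intro h
    exact absurd (Finset.mem_range.2 (by omega)) h

/-- For `A ∈ LDO^0(n)` (polarized form with `I_1 = 0` in all terms, i.e.
no total derivatives `d/dy_1`), viewed as a map `Loc(E)^{⊗n} → Ω^{N,0}`, one has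
`E ∘ A = 0` (with `E` the Euler operator) if and only if `A = 0`. -/
theorem euler_comp_eq_zero_iff {N n : ℕ} [NeZero n] (q : OpData N n) (hq : Good q)
    (h0 : ∀ Iα : Idx N n, Iα.1 0 ≠ 0 → q Iα = 0) :
    (∀ f, LocalTuple f → ∀ pt, Euler (realizeP q f) pt = 0)
      ↔ (∀ f, LocalTuple f → ∀ pt, realizeP q f pt = 0) := by
  constructor
  · exact main_forward hq h0
  · intro h f hf pt
    have hzero : realizeP q f = fun _ => 0 := funext (h f hf)
    rw [hzero]
    show (∑' I : MI N, (-1:ℝ)^(∑ i, I i) * DPow I (pderivU I (fun _ => (0:ℝ))) pt) = 0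
    have hterm : ∀ I : MI N,
        (-1:ℝ)^(∑ i, I i) * DPow I (pderivU I (fun _ : JetPt N => (0:ℝ))) pt = 0 := by
      intro I
      rw [pderivU_zero_fn, DPow_zero_fn]
      simp
    exact (tsum_congr hterm).trans tsum_zero
end JetBundle
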